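/- Let w : ℝ × ℝ → ℝ be a smooth function of (x,t) with w_xx(x,t) ≠ 0 for all (x,t), satisfying the evolution equation w_t = −1/w_xx. Define η : ℝ × ℝ → ℝ by η = w_xxx / w_xx³ − 3·2^{−2/3} / w_xx. Then η satisfies the linearized equation ∂η/∂t = ( 1/w_xx² )·∂²η/∂x² at every point (x,t). -/

import Mathlib

/-!
Write `u = w_xx`. Differentiating `w_t = -1/u` twice in `x` and commuting `∂_t` past `∂_x`
(Schwarz) gives `u_t = (u_x/u²)_x = u_xxx/u² - 2 u_x²/u³`, and from it
`u_xt = u_xxxx/u² - 6 u_x u_xxx/u³ + 6 u_x³/u⁴`. These two evolution laws are all that is needed to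
expand both sides of `η_t = η_xx/u²` for `η = u_x/u³ - c/u` into polynomials in
`u, u_x, u_xx, u_xxx, u⁻¹`, which agree for every constant `c`.
-/

/-- Partial derivative with respect to the first (space) variable. -/
noncomputable def pdx (f : ℝ × ℝ → ℝ) : ℝ × ℝ → ℝ :=
  fun p => deriv (fun x => f (x, p.2)) p.1

/-- Partial derivative with respect to the second (time) variable. -/
noncomputable def pdt (f : ℝ × ℝ → ℝ) : ℝ × ℝ → ℝ :=
  fun p => deriv (fun t => f (p.1, t)) p.2

section PartialDerivatives

variable {f : ℝ × ℝ → ℝ} {p : ℝ × ℝ}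

theorem hasDerivAt_pdx (hf : DifferentiableAt ℝ f p) :
    HasDerivAt (fun x => f (x, p.2)) (pdx f p) p.1 :=
  (hf.comp p.1 (differentiableAt_id.prodMk (differentiableAt_const _))).hasDerivAt

theorem hasDerivAt_pdt (hf : DifferentiableAt ℝ f p) :
    HasDerivAt (fun t => f (p.1, t)) (pdt f p) p.2 :=
  (hf.comp p.2 ((differentiableAt_const _).prodMk differentiableAt_id)).hasDerivAt

theorem pdx_eq_fderiv (hf : DifferentiableAt ℝ f p) : pdx f p = fderiv ℝ f p (1, 0) :=
  (hf.hasFDerivAt.comp_hasDerivAt p.1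
    ((hasDerivAt_id p.1).prodMk (hasDerivAt_const p.1 p.2))).deriv

theorem pdt_eq_fderiv (hf : DifferentiableAt ℝ f p) : pdt f p = fderiv ℝ f p (0, 1) :=
  (hf.hasFDerivAt.comp_hasDerivAt p.2
    ((hasDerivAt_const p.2 p.1).prodMk (hasDerivAt_id p.2))).deriv

theorem contDiff_pdx {m n : WithTop ℕ∞} (hf : ContDiff ℝ n f) (hmn : m + 1 ≤ n) :
    ContDiff ℝ m (pdx f) := by
  have hf1 : Differentiable ℝ f := (hf.of_le (le_add_self.trans hmn)).differentiable one_ne_zero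
  rw [show pdx f = fun q => fderiv ℝ f q (1, 0) from funext fun q => pdx_eq_fderiv (hf1 q)]
  exact (hf.fderiv_right hmn).clm_apply contDiff_const

theorem pdt_pdx_comm (hf : ContDiff ℝ 2 f) (p : ℝ × ℝ) : pdt (pdx f) p = pdx (pdt f) p := by
  have hf1 : Differentiable ℝ f := hf.differentiable (by norm_num)
  have hf' : DifferentiableAt ℝ (fderiv ℝ f) p :=
    (hf.fderiv_right (m := 1) le_rfl).differentiable one_ne_zero p
  have hx : pdx f = fun q => fderiv ℝ f q (1, 0) := funext fun q => pdx_eq_fderiv (hf1 q)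
  have ht : pdt f = fun q => fderiv ℝ f q (0, 1) := funext fun q => pdt_eq_fderiv (hf1 q)
  have hv : ∀ v : ℝ × ℝ, DifferentiableAt ℝ (fun q => fderiv ℝ f q v) p :=
    fun v => hf'.clm_apply (differentiableAt_const v)
  rw [hx, ht, pdt_eq_fderiv (hv _), pdx_eq_fderiv (hv _),
    fderiv_clm_apply hf' (differentiableAt_const _),
    fderiv_clm_apply hf' (differentiableAt_const _)]
  simpa using hf.contDiffAt.isSymmSndFDerivAt (by simp) (0, 1) (1, 0)

end PartialDerivatives

open scoped ContDiff

section Symmetry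

variable {u a b d : ℝ × ℝ → ℝ}

noncomputable def characteristic (c : ℝ) (u a : ℝ × ℝ → ℝ) : ℝ × ℝ → ℝ :=
  fun q => a q / u q ^ 3 - c / u q

theorem pdt_pdx_pdx_of_pdt_eq_neg_inv {w : ℝ × ℝ → ℝ} (hw : ContDiff ℝ ∞ w)
    (hu : pdx (pdx w) = u) (ha : pdx u = a) (hb : pdx a = b) (hu0 : ∀ p, u p ≠ 0)
    (heq : ∀ p, pdt w p = -1 / u p) (p : ℝ × ℝ) :
    pdt u p = b p / u p ^ 2 - 2 * a p ^ 2 / u p ^ 3 := by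
  have hwx : ContDiff ℝ ∞ (pdx w) := contDiff_pdx hw (by simp)
  have hu' : ContDiff ℝ ∞ u := hu ▸ contDiff_pdx hwx (by simp)
  have ha' : ContDiff ℝ ∞ a := ha ▸ contDiff_pdx hu' (by simp)
  have du : Differentiable ℝ u := hu'.differentiable (by simp)
  have da : Differentiable ℝ a := ha'.differentiable (by simp)
  have hwtx : pdx (pdt w) = fun q => a q / u q ^ 2 := by
    funext q
    rw [funext heq]
    exact ((hasDerivAt_const q.1 (-1)).fun_div (ha ▸ hasDerivAt_pdx (du q)) (hu0 q)).deriv.trans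
      (by simp only [Prod.mk.eta]; ring)
  have two_le : (2 : WithTop ℕ∞) ≤ ∞ := WithTop.coe_le_coe.mpr le_top
  calc pdt u p = pdx (pdx (pdt w)) p := by
        rw [← hu, pdt_pdx_comm (hwx.of_le two_le), funext (pdt_pdx_comm (hw.of_le two_le))]
    _ = b p / u p ^ 2 - 2 * a p ^ 2 / u p ^ 3 := by
        rw [hwtx]
        exact ((hb ▸ hasDerivAt_pdx (da p)).fun_div ((ha ▸ hasDerivAt_pdx (du p)).fun_pow 2)
          (pow_ne_zero 2 (hu0 p))).deriv.trans
          (by simp only [Prod.mk.eta]; field_simp [hu0 p]; ring)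

theorem pdt_pdx_of_pdt_eq (hu : ContDiff ℝ ∞ u) (hu0 : ∀ p, u p ≠ 0)
    (ha : pdx u = a) (hb : pdx a = b) (hd : pdx b = d)
    (hut : ∀ p, pdt u p = b p / u p ^ 2 - 2 * a p ^ 2 / u p ^ 3) (p : ℝ × ℝ) :
    pdt a p = d p / u p ^ 2 - 6 * a p * b p / u p ^ 3 + 6 * a p ^ 3 / u p ^ 4 := by
  have ha' : ContDiff ℝ ∞ a := ha ▸ contDiff_pdx hu (by simp)
  have hb' : ContDiff ℝ ∞ b := hb ▸ contDiff_pdx ha' (by simp)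
  have xu := ha ▸ hasDerivAt_pdx (hu.differentiable (by simp) p)
  have xa := hb ▸ hasDerivAt_pdx (ha'.differentiable (by simp) p)
  have xb := hd ▸ hasDerivAt_pdx (hb'.differentiable (by simp) p)
  rw [← ha, pdt_pdx_comm (hu.of_le (WithTop.coe_le_coe.mpr le_top)), ha, funext hut]
  exact ((xb.fun_div (xu.fun_pow 2) (pow_ne_zero 2 (hu0 p))).fun_sub
    (((xa.fun_pow 2).const_mul 2).fun_div (xu.fun_pow 3) (pow_ne_zero 3 (hu0 p)))).deriv.trans
    (by simp only [Prod.mk.eta]; field_simp [hu0 p]; ring)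

theorem pdx_pdx_characteristic (c : ℝ) (hu : ContDiff ℝ ∞ u) (hu0 : ∀ p, u p ≠ 0)
    (ha : pdx u = a) (hb : pdx a = b) (hd : pdx b = d) (p : ℝ × ℝ) :
    pdx (pdx (characteristic c u a)) p
      = d p / u p ^ 3 - 9 * a p * b p / u p ^ 4 + 12 * a p ^ 3 / u p ^ 5
        + c * b p / u p ^ 2 - 2 * c * a p ^ 2 / u p ^ 3 := by
  have ha' : ContDiff ℝ ∞ a := ha ▸ contDiff_pdx hu (by simp)
  have hb' : ContDiff ℝ ∞ b := hb ▸ contDiff_pdx ha' (by simp)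
  have xu (q : ℝ × ℝ) := ha ▸ hasDerivAt_pdx (hu.differentiable (by simp) q)
  have xa (q : ℝ × ℝ) := hb ▸ hasDerivAt_pdx (ha'.differentiable (by simp) q)
  have xb := hd ▸ hasDerivAt_pdx (hb'.differentiable (by simp) p)
  have hx : pdx (characteristic c u a)
      = fun q => b q / u q ^ 3 - 3 * a q ^ 2 / u q ^ 4 + c * a q / u q ^ 2 := by
    funext q
    exact (((xa q).fun_div ((xu q).fun_pow 3) (pow_ne_zero 3 (hu0 q))).fun_sub
      ((hasDerivAt_const q.1 c).fun_div (xu q) (hu0 q))).deriv.trans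
      (by simp only [Prod.mk.eta]; field_simp [hu0 q]; ring)
  rw [hx]
  exact (((xb.fun_div ((xu p).fun_pow 3) (pow_ne_zero 3 (hu0 p))).fun_sub
      ((((xa p).fun_pow 2).const_mul 3).fun_div ((xu p).fun_pow 4)
        (pow_ne_zero 4 (hu0 p)))).fun_add
      (((xa p).const_mul c).fun_div ((xu p).fun_pow 2) (pow_ne_zero 2 (hu0 p)))).deriv.trans
    (by simp only [Prod.mk.eta]; field_simp [hu0 p]; ring)

theorem pdt_characteristic (c : ℝ) (hu : ContDiff ℝ ∞ u) (hu0 : ∀ p, u p ≠ 0) (ha : pdx u = a)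
    (p : ℝ × ℝ) :
    pdt (characteristic c u a) p
      = pdt a p / u p ^ 3 - 3 * a p * pdt u p / u p ^ 4 + c * pdt u p / u p ^ 2 := by
  have ha' : ContDiff ℝ ∞ a := ha ▸ contDiff_pdx hu (by simp)
  have tu := hasDerivAt_pdt (hu.differentiable (by simp) p)
  have ta := hasDerivAt_pdt (ha'.differentiable (by simp) p)
  exact ((ta.fun_div (tu.fun_pow 3) (pow_ne_zero 3 (hu0 p))).fun_sub
    ((hasDerivAt_const p.2 c).fun_div tu (hu0 p))).deriv.trans
    (by simp only [Prod.mk.eta]; field_simp [hu0 p]; ring)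

theorem pdt_characteristic_eq_mul_pdx_pdx (c : ℝ) (hu : ContDiff ℝ ∞ u) (hu0 : ∀ p, u p ≠ 0)
    (ha : pdx u = a) (hb : pdx a = b) (hd : pdx b = d)
    (hut : ∀ p, pdt u p = b p / u p ^ 2 - 2 * a p ^ 2 / u p ^ 3) (p : ℝ × ℝ) :
    pdt (characteristic c u a) p
      = 1 / u p ^ 2 * pdx (pdx (characteristic c u a)) p := by
  rw [pdt_characteristic c hu hu0 ha, pdt_pdx_of_pdt_eq hu hu0 ha hb hd hut, hut,
    pdx_pdx_characteristic c hu hu0 ha hb hd]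
  field_simp [hu0 p]
  ring

end Symmetry

/-- Subcase 1.3c: for a solution of `w_t = −1/w_xx`, the function
`η = w_xxx / w_xx³ − 3·2^{−2/3} / w_xx` satisfies the linearized
(Lie–Bäcklund symmetry) equation. -/
theorem subcase13c_third_order_symmetry
    (w : ℝ × ℝ → ℝ) (hw : ContDiff ℝ (⊤ : ℕ∞) w)
    (hwxx : ∀ p : ℝ × ℝ, pdx (pdx w) p ≠ 0)
    (heq : ∀ p : ℝ × ℝ, pdt w p = -1 / pdx (pdx w) p)
    (η : ℝ × ℝ → ℝ)
    (hη : η = fun p =>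
      pdx (pdx (pdx w)) p / (pdx (pdx w) p) ^ 3
        - 3 * (2 : ℝ) ^ (-(2 : ℝ) / 3) / pdx (pdx w) p) :
    ∀ p : ℝ × ℝ, pdt η p = (1 / (pdx (pdx w) p) ^ 2) * pdx (pdx η) p := by
  subst hη
  have hwx : ContDiff ℝ ∞ (pdx w) := contDiff_pdx hw (by simp)
  have hu : ContDiff ℝ ∞ (pdx (pdx w)) := contDiff_pdx hwx (by simp)
  exact pdt_characteristic_eq_mul_pdx_pdx _ hu hwxx rfl rfl rfl
    (pdt_pdx_pdx_of_pdt_eq_neg_inv hw rfl rfl rfl hwxx heq)
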